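/- Let {X_ℓ, f_ℓ} be an inverse sequence of compact metric spaces with surjective continuous bonding functions and let g : varprojlim{X_ℓ, f_ℓ} → varprojlim{X_ℓ, f_ℓ} be a continuous function. The following are equivalent: (1) there is a point x ∈ varprojlim{X_ℓ, f_ℓ} with g(x) = x; (2) there are sequences (n_ℓ), (m_ℓ) of positive integers with m_{k+1} ≥ m_k, n_{k+1} > n_k, and m_k ≥ n_k for each k, and a sequence (H_ℓ) of upper semicontinuous set-valued functions H_ℓ : X_{m_ℓ} ⊸ X_{n_ℓ} such that (a) for each positive integer k, each j ∈ {1, …, n_k}, each positive integer r > k and each x ∈ X_{m_r}, f_{j,n_r}(H_r(x)) ⊆ f_{j,n_k}(H_k(f_{m_k,m_r}(x))); (b) for each positive integer k, each j ∈ {1, …, n_k}, and each x ∈ varprojlim{X_ℓ, f_ℓ}, p_j(g(x)) ∈ f_{j,n_k}(H_k(p_{m_k}(x))); (c) for each positive integer j and each x ∈ varprojlim{X_ℓ, f_ℓ}, lim_{k→∞} diam(f_{j,n_k}(H_k(p_{m_k}(x)))) = 0; and (d) for each positive integer k and each j ∈ {1, …, n_k}, there is a point x ∈ X_{m_k} such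 that f_{j,m_k}(x) ∈ f_{j,n_k}(H_k(x)). -/

import Mathlib

open Metric Filter Set Function

/-- The inverse limit of an inverse sequence `{X n, f n}` of spaces with
single-valued bonding maps `f n : X (n+1) → X n`. -/
def invLim (X : ℕ → Type*) (f : ∀ n, X (n + 1) → X n) : Set (∀ n, X n) :=
  {x | ∀ n, x n = f n (x (n + 1))}

/-- The composite bonding map `f_{n,m} : X m → X n` for `n ≤ m`. -/
def bondMap {X : ℕ → Type*} (f : ∀ n, X (n + 1) → X n) {n m : ℕ} (h : n ≤ m) :
    X m → X n :=
  Nat.leRecOn (C := fun k => X k → X n) h (fun {k} g => g ∘ f k) id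

/-- A set-valued function is upper semicontinuous (with nonempty closed values):
all of its values are nonempty closed sets and its graph is closed. -/
def IsUSC {A B : Type*} [TopologicalSpace A] [TopologicalSpace B] (F : A → Set B) : Prop :=
  (∀ a, (F a).Nonempty) ∧ (∀ a, IsClosed (F a)) ∧ IsClosed {p : A × B | p.2 ∈ F p.1}

/-- The `T_{n,m}` transformation of a map between inverse limits:
`T_{n,m}(g)(x) = q_n (g (p_m ⁻¹ x))`. -/
def Ttrans {X Y : ℕ → Type*} {f : ∀ n, X (n + 1) → X n} {gs : ∀ n, Y (n + 1) → Y n}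
    (g : ↥(invLim X f) → ↥(invLim Y gs)) (n m : ℕ) (x : X m) : Set (Y n) :=
  {y | ∃ z : ↥(invLim X f), z.1 m = x ∧ (g z).1 n = y}

/-- A space has the fixed point property if every continuous self-map has a fixed point. -/
def HasFPP (Z : Type*) [TopologicalSpace Z] : Prop :=
  ∀ g : Z → Z, Continuous g → ∃ p, g p = p

/-!
(1) ⇒ (2): take `n_k = m_k = k` and `H_k = T_{k,k}(g)`. Pushing `T_{k,k}(g)` down by the bonding
maps gives `T_{j,k}(g)`, which makes (a), (b) and (d) immediate; for (c), `T_{j,k}(g)(p_k z)` is the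
image under `p_j ∘ g` of the fibres of `p_k` through `z`, a decreasing sequence of compact sets
shrinking to `{z}`.

(2) ⇒ (1): the threads `z` with `p_{n_k}(z) ∈ H_k(p_{m_k}(z))` form closed sets, nonempty by (d)
and decreasing by (a). A thread `w` in all of them is fixed by `g`: by (b) the points `p_j(g w)`
and `p_j(w)` lie in a common set whose diameter tends to `0` by (c).
-/

open Topology

section BondMap

variable {X : ℕ → Type*} (f : ∀ n, X (n + 1) → X n)

lemma bondMap_self {n : ℕ} (h : n ≤ n) : bondMap f h = id :=
  Nat.leRecOn_self (C := fun k => X k → X n) id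

lemma bondMap_succ_right {n m : ℕ} (h : n ≤ m) (h' : n ≤ m + 1) :
    bondMap f h' = bondMap f h ∘ f m :=
  Nat.leRecOn_succ (C := fun k => X k → X n) h id

lemma image_bondMap_self {n : ℕ} (h : n ≤ n) (s : Set (X n)) : bondMap f h '' s = s := by
  rw [bondMap_self, Set.image_id]

lemma f_comp_bondMap {n m : ℕ} (h : n + 1 ≤ m) (h' : n ≤ m) :
    f n ∘ bondMap f h = bondMap f h' := by
  induction m, h using Nat.le_induction with
  | base => rw [bondMap_self, bondMap_succ_right f le_rfl, bondMap_self]; rfl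
  | succ m hm ih => rw [bondMap_succ_right f hm, ← comp_assoc, ih (by omega),
      ← bondMap_succ_right]

lemma bondMap_apply_of_mem_invLim {z : ∀ n, X n} (hz : z ∈ invLim X f) {n m : ℕ} (h : n ≤ m) :
    bondMap f h (z m) = z n := by
  induction m, h using Nat.le_induction with
  | base => rw [bondMap_self]; rfl
  | succ m hm ih => rw [bondMap_succ_right f hm, comp_apply, ← hz m, ih]

lemma exists_invLim_apply_eq (hfs : ∀ n, Surjective (f n)) (m : ℕ) (x : X m) :
    ∃ z : invLim X f, z.1 m = x := by
  let G : ∀ k, X (m + k) := fun k => Nat.rec x (fun k y => surjInv (hfs (m + k)) y) k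
  have hG : ∀ k, f (m + k) (G (k + 1)) = G k := fun k => surjInv_eq (hfs (m + k)) _
  have hGx : ∀ k (h : m ≤ m + k), bondMap f h (G k) = x := by
    intro k
    induction k with
    | zero => intro h; rw [bondMap_self]; rfl
    | succ k ih => intro h; rw [bondMap_succ_right f (Nat.le_add_right m k), comp_apply, hG, ih]
  refine ⟨⟨fun n => bondMap f (Nat.le_add_left n m) (G n), fun n => ?_⟩, hGx m _⟩
  calc bondMap f (Nat.le_add_left n m) (G n)
    _ = bondMap f (by omega) (G (n + 1)) := by
      rw [bondMap_succ_right f (Nat.le_add_left n m), comp_apply, hG]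
    _ = f n (bondMap f (Nat.le_add_left (n + 1) m) (G (n + 1))) := by
      rw [← comp_apply (f := f n), f_comp_bondMap]

lemma continuous_invLim_apply [∀ n, TopologicalSpace (X n)] (n : ℕ) :
    Continuous fun z : invLim X f => z.1 n :=
  (continuous_apply n).comp continuous_subtype_val

lemma compactSpace_invLim [∀ n, TopologicalSpace (X n)] [∀ n, CompactSpace (X n)]
    [∀ n, T2Space (X n)] (hfc : ∀ n, Continuous (f n)) : CompactSpace (invLim X f) := by
  refine isCompact_iff_compactSpace.mp (IsClosed.isCompact ?_)
  simp only [invLim, Set.ofPred_forall]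
  exact isClosed_iInter fun n => isClosed_eq (continuous_apply n)
    ((hfc n).comp (continuous_apply (n + 1)))

end BondMap

lemma tendsto_diam_image_of_antitone {A Y : Type*} [TopologicalSpace A] [CompactSpace A]
    [T2Space A] [PseudoMetricSpace Y] {φ : A → Y} (hφ : Continuous φ) {C : ℕ → Set A}
    (hC : Antitone C) (hCc : ∀ n, IsClosed (C n)) {z : A} (hz : ⋂ n, C n ⊆ {z}) :
    Tendsto (fun n => diam (φ '' C n)) atTop (𝓝 0) := by
  rw [Metric.tendsto_atTop]
  intro ε hε
  obtain ⟨N, hN⟩ := exists_subset_nhds_of_isCompact hC.directed_ge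
    (fun n => (hCc n).isCompact) (U := φ ⁻¹' ball (φ z) (ε / 3)) fun x hx => by
      rw [(hz hx : x = z)]
      exact hφ.continuousAt (ball_mem_nhds _ (by positivity))
  refine ⟨N, fun n hn => ?_⟩
  have hdiam : diam (φ '' C n) ≤ 2 * (ε / 3) :=
    (diam_mono (image_subset_iff.2 ((hC hn).trans hN)) isBounded_ball).trans
      (diam_ball (by positivity))
  rw [Real.dist_eq, sub_zero, abs_of_nonneg diam_nonneg]
  linarith

section Ttrans

variable {X Y : ℕ → Type*} {f : ∀ n, X (n + 1) → X n} {gs : ∀ n, Y (n + 1) → Y n}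
  (g : invLim X f → invLim Y gs)

lemma apply_mem_Ttrans (z : invLim X f) (n m : ℕ) : (g z).1 n ∈ Ttrans g n m (z.1 m) :=
  ⟨z, rfl, rfl⟩

lemma image_bondMap_Ttrans {j n m : ℕ} (h : j ≤ n) (x : X m) :
    bondMap gs h '' Ttrans g n m x = Ttrans g j m x := by
  ext y
  constructor
  · rintro ⟨_, ⟨z, hz, rfl⟩, rfl⟩
    exact ⟨z, hz, (bondMap_apply_of_mem_invLim gs (g z).2 h).symm⟩
  · rintro ⟨z, hz, rfl⟩
    exact ⟨_, ⟨z, hz, rfl⟩, bondMap_apply_of_mem_invLim gs (g z).2 h⟩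

lemma Ttrans_subset_Ttrans_bondMap {j k m : ℕ} (h : k ≤ m) (x : X m) :
    Ttrans g j m x ⊆ Ttrans g j k (bondMap f h x) := by
  rintro _ ⟨z, rfl, rfl⟩
  exact ⟨z, (bondMap_apply_of_mem_invLim f z.2 h).symm, rfl⟩

variable [∀ n, TopologicalSpace (X n)] [∀ n, CompactSpace (X n)] [∀ n, T2Space (X n)]

lemma isUSC_Ttrans [∀ n, TopologicalSpace (Y n)] [∀ n, T2Space (Y n)]
    (hfc : ∀ n, Continuous (f n)) (hfs : ∀ n, Surjective (f n)) (hg : Continuous g)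
    (n m : ℕ) : IsUSC (Ttrans g n m) := by
  have := compactSpace_invLim f hfc
  have hgraph : IsClosed {p : X m × Y n | p.2 ∈ Ttrans g n m p.1} := by
    have hrange : {p : X m × Y n | p.2 ∈ Ttrans g n m p.1} =
        range fun z => (z.1 m, (g z).1 n) := by
      ext ⟨x, y⟩
      simp only [Ttrans, mem_ofPred_eq, mem_range, Prod.mk.injEq]
    rw [hrange]
    exact (isCompact_range ((continuous_invLim_apply f m).prodMk
      ((continuous_invLim_apply gs n).comp hg))).isClosed
  refine ⟨fun x => ?_, fun x => hgraph.preimage (Continuous.prodMk_right x), hgraph⟩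
  obtain ⟨z, rfl⟩ := exists_invLim_apply_eq f hfs m x
  exact ⟨_, apply_mem_Ttrans g z n m⟩

lemma tendsto_diam_Ttrans [∀ n, PseudoMetricSpace (Y n)] (hfc : ∀ n, Continuous (f n))
    (hg : Continuous g) (j : ℕ) (z : invLim X f) :
    Tendsto (fun k => diam (Ttrans g j k (z.1 k))) atTop (𝓝 0) := by
  have := compactSpace_invLim f hfc
  refine tendsto_diam_image_of_antitone (φ := fun w => (g w).1 j)
    ((continuous_invLim_apply gs j).comp hg)
    (C := fun k => {w | w.1 k = z.1 k}) (antitone_nat_of_succ_le fun k w hw => ?_)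
    (fun k => isClosed_eq (continuous_invLim_apply f k) continuous_const)
    fun w hw => Subtype.ext (funext (mem_iInter.mp hw))
  exact (w.2 k).trans ((congrArg (f k) hw).trans (z.2 k).symm)

end Ttrans

section ThreadsInGraph

variable {X : ℕ → Type*} (f : ∀ n, X (n + 1) → X n) {ns ms : ℕ → ℕ}

def threadsInGraph (H : ∀ k, X (ms k) → Set (X (ns k))) (k : ℕ) : Set (invLim X f) :=
  {w | w.1 (ns k) ∈ H k (w.1 (ms k))}

variable {H : ∀ k, X (ms k) → Set (X (ns k))}

lemma mem_image_of_mem_threadsInGraph {k : ℕ} {w : invLim X f} (hw : w ∈ threadsInGraph f H k)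
    {j : ℕ} (hj : j ≤ ns k) : w.1 j ∈ bondMap f hj '' H k (w.1 (ms k)) :=
  ⟨_, hw, bondMap_apply_of_mem_invLim f w.2 hj⟩

lemma nonempty_iInter_threadsInGraph [∀ n, TopologicalSpace (X n)] [∀ n, CompactSpace (X n)]
    [∀ n, T2Space (X n)] (hfc : ∀ n, Continuous (f n)) (hfs : ∀ n, Surjective (f n))
    (hnm : ∀ k, ns k ≤ ms k) (hns : ∀ k, ns k ≤ ns (k + 1)) (hms : ∀ k, ms k ≤ ms (k + 1))
    (hH : ∀ k, IsClosed {p : X (ms k) × X (ns k) | p.2 ∈ H k p.1})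
    (hsucc : ∀ k x, bondMap f (hns k) '' H (k + 1) x ⊆ H k (bondMap f (hms k) x))
    (hfix : ∀ k, ∃ x, bondMap f (hnm k) x ∈ H k x) :
    (⋂ k, threadsInGraph f H k).Nonempty := by
  have := compactSpace_invLim f hfc
  refine IsCompact.nonempty_iInter_of_sequence_nonempty_isCompact_isClosed _ (fun k w hw => ?_)
    (fun k => ?_) (IsClosed.isCompact ?_) (fun k => ?_)
  · rw [threadsInGraph, mem_ofPred_eq, ← bondMap_apply_of_mem_invLim f w.2 (hms k),
      ← bondMap_apply_of_mem_invLim f w.2 (hns k)]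
    exact hsucc k _ (mem_image_of_mem _ hw)
  · obtain ⟨x, hx⟩ := hfix k
    obtain ⟨w, rfl⟩ := exists_invLim_apply_eq f hfs (ms k) x
    exact ⟨w, by rwa [threadsInGraph, mem_ofPred_eq, ← bondMap_apply_of_mem_invLim f w.2 (hnm k)]⟩
  all_goals
    exact (hH _).preimage ((continuous_invLim_apply f _).prodMk (continuous_invLim_apply f _))

lemma eq_of_forall_mem_threadsInGraph [∀ n, MetricSpace (X n)] [∀ n, CompactSpace (X n)]
    (hns : Tendsto ns atTop atTop) (g : invLim X f → invLim X f)
    (hb : ∀ k j, ∀ hj : j ≤ ns k, ∀ z : invLim X f,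
      (g z).1 j ∈ bondMap f hj '' H k (z.1 (ms k)))
    (hc : ∀ j, ∀ z : invLim X f, Tendsto (fun k =>
      diam (if hj : j ≤ ns k then bondMap f hj '' H k (z.1 (ms k)) else (∅ : Set (X j))))
      atTop (𝓝 0))
    {w : invLim X f} (hw : ∀ k, w ∈ threadsInGraph f H k) : g w = w := by
  refine Subtype.ext (funext fun j => dist_le_zero.mp (ge_of_tendsto (hc j w) ?_))
  filter_upwards [hns.eventually_ge_atTop j] with k hjk
  rw [dif_pos hjk]
  exact dist_le_diam_of_mem isBounded_of_compactSpace (hb k j hjk w)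
    (mem_image_of_mem_threadsInGraph f (hw k) hjk)

end ThreadsInGraph

theorem stmt12
    {X : ℕ → Type*} [∀ n, MetricSpace (X n)] [∀ n, CompactSpace (X n)]
    (f : ∀ n, X (n + 1) → X n)
    (hfc : ∀ n, Continuous (f n)) (hfs : ∀ n, Surjective (f n))
    (g : ↥(invLim X f) → ↥(invLim X f)) (hg : Continuous g) :
    (∃ x : ↥(invLim X f), g x = x) ↔
    (∃ ns ms : ℕ → ℕ, ∃ hnm : ∀ k, ns k ≤ ms k,
      ∃ H : ∀ k, X (ms k) → Set (X (ns k)),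
      (∀ k, ms k ≤ ms (k + 1)) ∧ (∀ k, ns k < ns (k + 1)) ∧
      (∀ k, IsUSC (H k)) ∧
      (∀ k r : ℕ, k < r → ∀ (hnr : ns k ≤ ns r) (hmr : ms k ≤ ms r),
        ∀ j : ℕ, ∀ hj : j ≤ ns k, ∀ x : X (ms r),
          bondMap f (hj.trans hnr) '' H r x ⊆
            bondMap f hj '' H k (bondMap f hmr x)) ∧
      (∀ k j : ℕ, ∀ hj : j ≤ ns k, ∀ z : ↥(invLim X f),
        (g z).1 j ∈ bondMap f hj '' H k (z.1 (ms k))) ∧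
      (∀ j : ℕ, ∀ z : ↥(invLim X f),
        Tendsto (fun k =>
            diam (if hj : j ≤ ns k then
              bondMap f hj '' H k (z.1 (ms k))
            else (∅ : Set (X j))))
          atTop (nhds (0 : ℝ))) ∧
      (∀ k j : ℕ, ∀ hj : j ≤ ns k, ∃ x : X (ms k),
        bondMap f (hj.trans (hnm k)) x ∈ bondMap f hj '' H k x)) := by
  constructor
  · rintro ⟨x₀, hx₀⟩
    refine ⟨fun k => k, fun k => k, fun _ => le_rfl, fun k => Ttrans g k k, fun k => k.le_succ,
      fun k => k.lt_succ_self, fun k => isUSC_Ttrans g hfc hfs hg k k, ?_, ?_, ?_, ?_⟩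
    · intro k r _ hnr hmr j hj x
      rw [image_bondMap_Ttrans, image_bondMap_Ttrans]
      exact Ttrans_subset_Ttrans_bondMap g hmr x
    · intro k j hj z
      rw [image_bondMap_Ttrans]
      exact apply_mem_Ttrans g z j k
    · intro j z
      refine (tendsto_diam_Ttrans g hfc hg j z).congr' ?_
      filter_upwards [eventually_ge_atTop j] with k hk
      rw [dif_pos hk, image_bondMap_Ttrans]
    · intro k j hj
      refine ⟨x₀.1 k, ?_⟩
      rw [image_bondMap_Ttrans, bondMap_apply_of_mem_invLim f x₀.2]
      simpa only [hx₀] using apply_mem_Ttrans g x₀ j k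
  · rintro ⟨ns, ms, hnm, H, hms, hns, husc, ha, hb, hc, hd⟩
    have hsucc : ∀ k x, bondMap f (hns k).le '' H (k + 1) x ⊆ H k (bondMap f (hms k) x) :=
      fun k x => by
        simpa only [image_bondMap_self] using
          ha k (k + 1) k.lt_succ_self (hns k).le (hms k) (ns k) le_rfl x
    have hfix : ∀ k, ∃ x, bondMap f (hnm k) x ∈ H k x :=
      fun k => by simpa only [image_bondMap_self] using hd k (ns k) le_rfl
    obtain ⟨w, hw⟩ := nonempty_iInter_threadsInGraph f hfc hfs hnm (fun k => (hns k).le) hms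
      (fun k => (husc k).2.2) hsucc hfix
    exact ⟨w, eq_of_forall_mem_threadsInGraph f (strictMono_nat_of_lt_succ hns).tendsto_atTop g
      hb hc (mem_iInter.mp hw)⟩
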